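/- Let q be a prime with q ≡ 7 (mod 8), and write the fundamental unit of Q(√(2q)) as ε_2q = c + d√(2q) with positive integers c, d. Then c + 1 is a perfect square, and there exist integers d₁, d₂ such that 2·ε_2q = (d₁ + d₂√(2q))² in Q(√(2q)) and d₁² - 2q·d₂² = 2. -/

import Mathlib

/-!
Since `ε⁻¹` is integral, the norm `c ^ 2 - 2q d ^ 2` is `±1`, and `-1` is impossible because `-1`
is not a square mod `q`. Hence `c` is odd, `d` is even and `(c + 1) / 2 · (c - 1) / 2 = 2q (d / 2) ^ 2`
with coprime factors, so `(c + 1) / 2 = a u ^ 2`, `(c - 1) / 2 = b v ^ 2` with `a b = 2q`,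
`a u ^ 2 - b v ^ 2 = 1`, `c = a u ^ 2 + b v ^ 2` and `d = 2 u v`. Modulo `q`, the cases `a = q` and
`a = 2q` would make `-2` resp. `-1` a square; for `a = 1`, `u + v √(2q)` would be a unit with square
`ε`. So `a = 2`, which gives `c + 1 = (2u) ^ 2` and `2ε = (2u + v √(2q)) ^ 2`.
-/

noncomputable section

open IntermediateField

/-- Conditions (1): `p` and `q` are odd primes with `p ≡ 1 (mod 4)`, `q ≡ 3 (mod 4)`,
`(2/p) = -1`, `(2/q) = 1` and `(p/q) = -1`. -/
def Cond1 (p q : ℕ) : Prop :=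
  p.Prime ∧ q.Prime ∧ p % 4 = 1 ∧ q % 4 = 3 ∧
    jacobiSym 2 p = -1 ∧ jacobiSym 2 q = 1 ∧ jacobiSym (p : ℤ) q = -1

/-- `x` is a unit of the ring of integers of the subfield `K` of `ℝ`. -/
def IsUnitOfIntegers (K : IntermediateField ℚ ℝ) (x : ℝ) : Prop :=
  x ∈ K ∧ IsIntegral ℤ x ∧ IsIntegral ℤ x⁻¹

/-- `ε` is the fundamental unit of `ℚ(√d)`: it is a unit of the ring of integers,
it is `> 1`, and every unit is `±ε^n` for some `n : ℤ`. -/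
def IsFundUnit (d : ℕ) (ε : ℝ) : Prop :=
  1 < ε ∧ IsUnitOfIntegers (adjoin ℚ {Real.sqrt d}) ε ∧
    ∀ x : ℝ, IsUnitOfIntegers (adjoin ℚ {Real.sqrt d}) x →
      ∃ n : ℤ, x = ε ^ n ∨ x = -ε ^ n

theorem Nat.not_isSquare_of_mod_four_eq_two {n : ℕ} (hn : n % 4 = 2) : ¬ IsSquare n := by
  rintro ⟨r, rfl⟩
  rcases Nat.even_or_odd' r with ⟨s, rfl | rfl⟩ <;> ring_nf at hn <;> omega

theorem Nat.Coprime.exists_eq_mul_sq_of_mul_eq_mul_sq {x y m e : ℕ} (hxy : x.Coprime y)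
    (hm : m ≠ 0) (h : x * y = m * e ^ 2) :
    ∃ a b u v, a * b = m ∧ x = a * u ^ 2 ∧ y = b * v ^ 2 ∧ e = u * v := by
  obtain ⟨x', hx'⟩ := Nat.gcd_dvd_right m x
  obtain ⟨y', hy'⟩ := Nat.gcd_dvd_right m y
  have hm_eq : m.gcd x * m.gcd y = m := by
    rw [← hxy.gcd_mul m, Nat.gcd_eq_left ⟨e ^ 2, h⟩]
  have hx'y' : x' * y' = e ^ 2 := by
    refine Nat.eq_of_mul_eq_mul_left (Nat.pos_of_ne_zero hm) ?_
    calc m * (x' * y') = (m.gcd x * x') * (m.gcd y * y') := by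
          nth_rw 1 [← hm_eq]; ring
      _ = m * e ^ 2 := by rw [← hx', ← hy', h]
  have hcop : x'.Coprime y' :=
    (hxy.coprime_dvd_left (Dvd.intro_left _ hx'.symm)).coprime_dvd_right
      (Dvd.intro_left _ hy'.symm)
  obtain ⟨u, rfl⟩ := exists_eq_pow_of_mul_eq_pow (Nat.isUnit_iff.mpr hcop) hx'y'
  obtain ⟨v, rfl⟩ := exists_eq_pow_of_mul_eq_pow (Nat.isUnit_iff.mpr hcop.symm)
    ((mul_comm _ _).trans hx'y')
  refine ⟨_, _, u, v, hm_eq, hx', hy', Nat.pow_left_injective two_ne_zero ?_⟩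
  simp only [← hx'y', mul_pow]

theorem Nat.exists_of_sq_eq_two_mul_mul_sq_add_one {n c d : ℕ} (hn : Odd n)
    (h : c ^ 2 = 2 * n * d ^ 2 + 1) :
    ∃ a b u v, a * b = 2 * n ∧ a * u ^ 2 = b * v ^ 2 + 1 ∧ c = a * u ^ 2 + b * v ^ 2 ∧
      d = 2 * (u * v) := by
  obtain ⟨k, rfl⟩ : Odd c := by
    refine (Nat.odd_pow_iff two_ne_zero).mp ?_
    rw [h]
    exact ⟨n * d ^ 2, by ring⟩
  have hk : 2 * (k * (k + 1)) = n * d ^ 2 := by nlinarith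
  obtain ⟨e, rfl⟩ : 2 ∣ d := by
    have h2 : 2 ∣ n * d ^ 2 := ⟨_, hk.symm⟩
    rcases (Nat.prime_two.dvd_mul).mp h2 with h2n | h2d
    · exact absurd h2n hn.not_two_dvd_nat
    · exact Nat.prime_two.dvd_of_dvd_pow h2d
  have he : (k + 1) * k = 2 * n * e ^ 2 := by nlinarith
  obtain ⟨a, b, u, v, hab, hka, hkb, rfl⟩ :=
    (Nat.coprime_self_add_left.mpr (Nat.coprime_one_left k)).exists_eq_mul_sq_of_mul_eq_mul_sq
      (by have := hn.pos; omega) he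
  exact ⟨a, b, u, v, hab, by omega, by omega, rfl⟩

theorem Nat.Prime.not_dvd_sq_add_one {p : ℕ} (hp : p.Prime) (hp4 : p % 4 = 3) (n : ℕ) :
    ¬ p ∣ n ^ 2 + 1 := by
  have := Fact.mk hp
  intro h
  refine ZMod.exists_sq_eq_neg_one_iff.mp ⟨n, ?_⟩ hp4
  rw [← ZMod.natCast_eq_zero_iff] at h
  push_cast at h
  linear_combination -h

theorem Nat.Prime.not_dvd_sq_add_two {p : ℕ} (hp : p.Prime) (hp8 : p % 8 = 5 ∨ p % 8 = 7)
    (n : ℕ) : ¬ p ∣ n ^ 2 + 2 := by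
  have := Fact.mk hp
  intro h
  rw [← ZMod.natCast_eq_zero_iff] at h
  push_cast at h
  have := (ZMod.exists_sq_eq_neg_two_iff (p := p) (by omega)).mp ⟨n, by linear_combination -h⟩
  omega

theorem Nat.Prime.exists_of_sq_eq_two_mul_mul_sq_add_one {q c d : ℕ} (hq : q.Prime)
    (hq8 : q % 8 = 7) (h : c ^ 2 = 2 * q * d ^ 2 + 1) :
    (∃ u v, u ^ 2 = 2 * q * v ^ 2 + 1 ∧ c = u ^ 2 + 2 * q * v ^ 2 ∧ d = 2 * (u * v)) ∨
      ∃ u v, 2 * u ^ 2 = q * v ^ 2 + 1 ∧ c = 2 * u ^ 2 + q * v ^ 2 ∧ d = 2 * (u * v) := by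
  have hq_odd : Odd q := Nat.odd_iff.mpr (by omega)
  obtain ⟨a, b, u, v, hab, hpell, rfl, rfl⟩ := Nat.exists_of_sq_eq_two_mul_mul_sq_add_one hq_odd h
  obtain ⟨a₁, a₂, ha₁, ha₂, rfl⟩ := Nat.dvd_mul.mp (Dvd.intro b hab)
  rcases (Nat.dvd_prime Nat.prime_two).mp ha₁ with rfl | rfl <;>
    rcases (Nat.dvd_prime hq).mp ha₂ with rfl | rfl
  · obtain rfl : b = 2 * q := by simpa using hab
    exact Or.inl ⟨u, v, by simpa using hpell, by simp, rfl⟩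
  · obtain rfl : b = 2 := Nat.eq_of_mul_eq_mul_left hq.pos (by linarith)
    exact absurd ⟨2 * u ^ 2, by linarith⟩ (hq.not_dvd_sq_add_two (Or.inr hq8) (2 * v))
  · obtain rfl : b = q := Nat.eq_of_mul_eq_mul_left two_pos (by linarith)
    exact Or.inr ⟨u, v, by simpa using hpell, by simp, rfl⟩
  · obtain rfl : b = 1 := by nlinarith [hq.pos]
    exact absurd ⟨2 * u ^ 2, by linarith⟩ (hq.not_dvd_sq_add_one (by omega) v)

open Polynomial in
theorem Irrational.exists_intCast_eq_of_isIntegral {x : ℝ} (hirr : Irrational x)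
    (hx : IsIntegral ℤ x) {b c : ℚ} (h : x ^ 2 + b * x + c = 0) :
    (∃ m : ℤ, (m : ℚ) = b) ∧ ∃ n : ℤ, (n : ℚ) = c := by
  set p : ℚ[X] := X ^ 2 + (C b * X + C c)
  have hp_monic : p.Monic := monic_X_pow_add degree_linear_lt
  have hp_root : aeval x p = 0 := by
    simp only [p, map_add, map_mul, map_pow, aeval_X, aeval_C, eq_ratCast]
    rw [← h]; ring
  have hminpoly : minpoly ℚ x = p := by
    refine (eq_of_monic_of_dvd_of_natDegree_le (minpoly.monic hx.tower_top) hp_monic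
      (minpoly.dvd ℚ x hp_root) ?_).symm
    have hp_deg : p.natDegree ≤ 2 := by unfold p; compute_degree
    refine hp_deg.trans ((minpoly.two_le_natDegree_iff hx.tower_top).mpr ?_)
    rintro ⟨r, rfl⟩
    exact hirr ⟨r, (eq_ratCast _ r).symm⟩
  have hcoeff (i : ℕ) : ((minpoly ℤ x).coeff i : ℚ) = p.coeff i := by
    rw [← hminpoly, minpoly.isIntegrallyClosed_eq_field_fractions' ℚ hx, coeff_map, eq_intCast]
  exact ⟨⟨_, by simpa [p] using hcoeff 1⟩, ⟨_, by simpa [p] using hcoeff 0⟩⟩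

theorem sq_sub_mul_sq_eq_one_or_eq_neg_one_of_isIntegral_inv {m : ℕ} (hm : Irrational √m)
    {c d : ℤ} (hd : d ≠ 0) (hint : IsIntegral ℤ (c + d * √m)⁻¹) :
    c ^ 2 - m * d ^ 2 = 1 ∨ c ^ 2 - m * d ^ 2 = -1 := by
  set ε : ℝ := c + d * √m
  set N : ℤ := c ^ 2 - m * d ^ 2
  have hε_irr : Irrational ε := (hm.intCast_mul hd).intCast_add c
  have hε : ε ≠ 0 := hε_irr.ne_zero
  have hε_root : ε ^ 2 - 2 * c * ε + N = 0 := by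
    simp only [ε, N]; push_cast
    linear_combination (d : ℝ) ^ 2 * Real.sq_sqrt (Nat.cast_nonneg m)
  have hN : N ≠ 0 := by
    intro hN
    have : ε * (ε - 2 * c) = 0 := by rw [hN, Int.cast_zero] at hε_root; linear_combination hε_root
    rcases mul_eq_zero.mp this with h | h
    · exact hε h
    · exact hε_irr.ne_int (2 * c) (by push_cast; linarith)
  -- Being irrational, `ε⁻¹` has minimal polynomial `X ^ 2 - (2c / N) X + 1 / N`.
  have hinv_root : ε⁻¹ ^ 2 + ((-(2 * c) / N : ℚ) : ℝ) * ε⁻¹ + ((1 / N : ℚ) : ℝ) = 0 := by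
    push_cast
    field_simp
    linear_combination hε_root
  obtain ⟨-, n, hn⟩ := hε_irr.inv.exists_intCast_eq_of_isIntegral hint hinv_root
  have hNn : N * n = 1 := by
    have : (N * n : ℚ) = 1 := by
      rw [hn, mul_one_div_cancel (Int.cast_ne_zero.mpr hN)]
    exact_mod_cast this
  exact Int.isUnit_iff.mp (IsUnit.of_mul_eq_one n hNn)

theorem isIntegral_intCast_add_intCast_mul_sqrt (u w : ℤ) (m : ℕ) :
    IsIntegral ℤ ((u : ℝ) + w * √m) := by
  have h_sqrt : IsIntegral ℤ (√m : ℝ) := .of_pow two_pos <| by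
    rw [Real.sq_sqrt (Nat.cast_nonneg m)]
    exact isIntegral_natCast m
  exact (isIntegral_intCast u).add ((isIntegral_intCast w).mul h_sqrt)

theorem isUnitOfIntegers_of_sq_sub_mul_sq_eq_one {m : ℕ} {u w : ℤ} (h : u ^ 2 - m * w ^ 2 = 1) :
    IsUnitOfIntegers (adjoin ℚ {√m}) (u + w * √m) := by
  have h_inv : ((u : ℝ) + w * √m)⁻¹ = u + (-w : ℤ) * √m := by
    refine inv_eq_of_mul_eq_one_right ?_
    have hR : (u : ℝ) ^ 2 - m * w ^ 2 = 1 := by exact_mod_cast h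
    push_cast
    linear_combination hR - (w : ℝ) ^ 2 * Real.sq_sqrt (Nat.cast_nonneg m)
  refine ⟨add_mem (intCast_mem _ u) (mul_mem (intCast_mem _ w) (mem_adjoin_simple_self ℚ _)),
    isIntegral_intCast_add_intCast_mul_sqrt u w m, ?_⟩
  rw [h_inv]
  exact isIntegral_intCast_add_intCast_mul_sqrt u (-w) m

theorem IsFundUnit.sq_ne {m : ℕ} {ε η : ℝ} (hε : IsFundUnit m ε)
    (hη : IsUnitOfIntegers (adjoin ℚ {√m}) η) : η ^ 2 ≠ ε := by
  intro h
  obtain ⟨n, hn⟩ := hε.2.2 η hη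
  have hsq : η ^ 2 = (ε ^ n) ^ 2 := by rcases hn with rfl | rfl <;> ring
  have : ε ^ (2 * n) = ε ^ (1 : ℤ) := by
    rw [mul_comm, zpow_mul, zpow_two, ← sq, ← hsq, h, zpow_one]
  have := zpow_right_injective₀ (zero_lt_one.trans hε.1) hε.1.ne' this
  omega

theorem statement14 (q : ℕ) (hq : q.Prime) (hq8 : q % 8 = 7) (ε2q : ℝ)
    (hε2q : IsFundUnit (2 * q) ε2q) (c d : ℤ) (hc : 0 < c) (hd : 0 < d)
    (heq : ε2q = (c : ℝ) + (d : ℝ) * Real.sqrt (2 * q)) :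
    (∃ s : ℤ, c + 1 = s ^ 2) ∧
    ∃ d₁ d₂ : ℤ, 2 * ε2q = ((d₁ : ℝ) + (d₂ : ℝ) * Real.sqrt (2 * q)) ^ 2 ∧
      d₁ ^ 2 - 2 * (q : ℤ) * d₂ ^ 2 = 2 := by
  have h_sqrt : √(2 * q : ℝ) = √((2 * q : ℕ) : ℝ) := by push_cast; rfl
  have h_sqrt_sq : √(2 * q : ℝ) ^ 2 = 2 * q := Real.sq_sqrt (by positivity)
  have h_irr : Irrational √((2 * q : ℕ) : ℝ) :=
    irrational_sqrt_natCast_iff.mpr (Nat.not_isSquare_of_mod_four_eq_two (by omega))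
  have h_norm := sq_sub_mul_sq_eq_one_or_eq_neg_one_of_isIntegral_inv h_irr hd.ne'
    (by rw [← h_sqrt, ← heq]; exact hε2q.2.1.2.2)
  lift c to ℕ using hc.le
  lift d to ℕ using hd.le
  have h_pell : c ^ 2 = 2 * q * d ^ 2 + 1 := by
    zify
    rcases h_norm with h | h
    · push_cast at h; linarith
    · refine absurd ⟨2 * d ^ 2, ?_⟩ (hq.not_dvd_sq_add_one (by omega) c)
      zify; push_cast at h; linarith
  rcases hq.exists_of_sq_eq_two_mul_mul_sq_add_one hq8 h_pell with
    ⟨u, v, huv, rfl, rfl⟩ | ⟨u, v, huv, rfl, rfl⟩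
  · zify at huv
    refine absurd ?_ (hε2q.sq_ne (isUnitOfIntegers_of_sq_sub_mul_sq_eq_one (u := u) (w := v) ?_))
    · rw [heq, ← h_sqrt]; push_cast
      linear_combination (v : ℝ) ^ 2 * h_sqrt_sq
    · push_cast; linear_combination huv
  · zify at huv
    refine ⟨⟨2 * u, by push_cast; linear_combination -huv⟩, 2 * u, v, ?_,
      by linear_combination 2 * huv⟩
    rw [heq]; push_cast
    linear_combination -(v : ℝ) ^ 2 * h_sqrt_sq
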